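/- arXiv:2003.08411 — 2 statements merged into one kernel-verified Lean document; each statement's English description precedes it below -/
import Mathlib

section
/- Let H be an n × n Hermitian matrix with all eigenvalues in [c₂, c₁] and let τ > 0 satisfy 1/τ ≤ c₂ ≤ c₁. Then log n − S(ρ_H^τ) ≤ τ·c₁·(1 − exp(τ(c₂ − c₁))). -/
open Real Finset

/-- Gibbs-state entropy in terms of the eigenvalues `lam`:
`S(ρ_H^τ) = τ·(Σ_i λ_i e^{-τλ_i})/(Σ_i e^{-τλ_i}) + log(Σ_i e^{-τλ_i})`. -/
noncomputable def gibbsEntropy {m : Type*} [Fintype m] (τ : ℝ) (lam : m → ℝ) : ℝ :=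
  τ * (∑ i, lam i * Real.exp (-τ * lam i)) / (∑ i, Real.exp (-τ * lam i)) +
    Real.log (∑ i, Real.exp (-τ * lam i))

/-!
The entropy is `τ⟨λ⟩ + log Z` with `⟨λ⟩` the Gibbs mean of the eigenvalues and `Z` the partition
function. Since `⟨λ⟩ ≥ c₂` and `Z ≥ n e^{-τc₁}`, the entropy deficit `log n - S` is at most
`x := τ(c₁ - c₂)`. Finally `e^{-x} ≤ 1/(1 + x)` and `1 + x ≤ τc₁` (this is where `τc₂ ≥ 1` enters)
give `x ≤ τc₁(1 - e^{-x})`.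
-/

section GibbsEntropy

variable {m : Type*} [Fintype m]

theorem le_sum_mul_div_sum_of_le {c : ℝ} {lam w : m → ℝ} [Nonempty m]
    (hw : ∀ i, 0 < w i) (hc : ∀ i, c ≤ lam i) :
    c ≤ (∑ i, lam i * w i) / ∑ i, w i := by
  have hpos : 0 < ∑ i, w i := Finset.sum_pos (fun i _ => hw i) univ_nonempty
  rw [le_div_iff₀ hpos, Finset.mul_sum]
  exact Finset.sum_le_sum fun i _ => mul_le_mul_of_nonneg_right (hc i) (hw i).le

theorem log_card_add_le_log_sum_exp {a : ℝ} {f : m → ℝ} [Nonempty m] (ha : ∀ i, a ≤ f i) :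
    Real.log (Fintype.card m) + a ≤ Real.log (∑ i, Real.exp (f i)) := by
  have hsum : (Fintype.card m : ℝ) * Real.exp a ≤ ∑ i, Real.exp (f i) := by
    simpa [Finset.card_univ] using
      Finset.card_nsmul_le_sum univ (fun i => Real.exp (f i)) (Real.exp a)
        fun i _ => Real.exp_le_exp.mpr (ha i)
  calc Real.log (Fintype.card m) + a = Real.log ((Fintype.card m : ℝ) * Real.exp a) := by
        rw [Real.log_mul (by positivity) (Real.exp_ne_zero a), Real.log_exp]
    _ ≤ _ := Real.log_le_log (by positivity) hsum

theorem log_card_sub_gibbsEntropy_le [Nonempty m] {τ c₁ c₂ : ℝ} {lam : m → ℝ} (hτ : 0 ≤ τ)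
    (hlow : ∀ i, c₂ ≤ lam i) (hup : ∀ i, lam i ≤ c₁) :
    Real.log (Fintype.card m) - gibbsEntropy τ lam ≤ τ * (c₁ - c₂) := by
  have hmean : c₂ ≤ (∑ i, lam i * Real.exp (-τ * lam i)) / ∑ i, Real.exp (-τ * lam i) :=
    le_sum_mul_div_sum_of_le (fun i => Real.exp_pos _) hlow
  have hlogZ : Real.log (Fintype.card m) + -τ * c₁ ≤ Real.log (∑ i, Real.exp (-τ * lam i)) :=
    log_card_add_le_log_sum_exp fun i => by nlinarith [hup i]
  rw [gibbsEntropy, mul_div_assoc]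
  nlinarith [mul_le_mul_of_nonneg_left hmean hτ]

end GibbsEntropy

theorem le_mul_one_sub_exp_neg {x y : ℝ} (hx : 0 ≤ x) (hxy : 1 + x ≤ y) :
    x ≤ y * (1 - Real.exp (-x)) := by
  have hexp : Real.exp (-x) * (1 + x) ≤ 1 := by
    calc Real.exp (-x) * (1 + x) ≤ Real.exp (-x) * Real.exp x := by
          gcongr; linarith [Real.add_one_le_exp x]
      _ = 1 := by rw [← Real.exp_add, neg_add_cancel, Real.exp_zero]
  have hle : Real.exp (-x) ≤ 1 := Real.exp_le_one_iff.mpr (by linarith)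
  nlinarith

theorem gibbs_entropy_bound_large_tau (n : ℕ) (hn : 0 < n)
    (H : Matrix (Fin n) (Fin n) ℂ) (hH : H.IsHermitian)
    (c₁ c₂ τ : ℝ) (hτ : 0 < τ)
    (hbound : ∀ i, c₂ ≤ hH.eigenvalues i ∧ hH.eigenvalues i ≤ c₁)
    (h1 : 1 / τ ≤ c₂) (h2 : c₂ ≤ c₁) :
    Real.log n - gibbsEntropy τ hH.eigenvalues ≤
      τ * c₁ * (1 - Real.exp (τ * (c₂ - c₁))) := by
  have : Nonempty (Fin n) := ⟨⟨0, hn⟩⟩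
  have hτc₂ : 1 ≤ τ * c₂ := by rwa [div_le_iff₀ hτ, mul_comm] at h1
  calc Real.log n - gibbsEntropy τ hH.eigenvalues ≤ τ * (c₁ - c₂) := by
        simpa using log_card_sub_gibbsEntropy_le hτ.le (fun i => (hbound i).1)
          (fun i => (hbound i).2)
    _ ≤ τ * c₁ * (1 - Real.exp (-(τ * (c₁ - c₂)))) :=
        le_mul_one_sub_exp_neg (mul_nonneg hτ.le (sub_nonneg.mpr h2)) (by linarith)
    _ = τ * c₁ * (1 - Real.exp (τ * (c₂ - c₁))) := by ring_nf
end

section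
/- Let (H_n) be a sequence of singular positive semidefinite n × n Hermitian matrices with exactly one zero eigenvalue, whose smallest nonzero eigenvalue is λ_{n-1} = a·log n and largest eigenvalue is λ_1 = b·log n for constants b ≥ a > 0. If τ > 1/a, then S(ρ_{H_n}^τ) → 0 as n → ∞. -/
/-!
With `t = log n`, the ground state has Boltzmann weight `1` and each of the other `n - 1` states
has weight at most `e^{-τ a t} = n^{-τa}`. Hence the partition function is `Z ≤ 1 + n·n^{-τa}`, and
the energy term `τ·(Σ λ_i e^{-τλ_i})/Z` is at most `τ·n·(b t)·n^{-τa}`. Bounding `log Z ≤ Z - 1`,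
the entropy lies between `0` and `(τ b t + 1)·e^{-(τa - 1) t}`, which tends to `0` because `τa > 1`.
-/

open Real Finset Filter ComplexOrder

section Bounds

variable {m : Type*} [Fintype m] {τ : ℝ} {lam : m → ℝ}

lemma gibbsEntropy_nonneg (hτ : 0 ≤ τ) (hS : 0 ≤ ∑ i, lam i * exp (-τ * lam i))
    (hZ : 1 ≤ ∑ i, exp (-τ * lam i)) : 0 ≤ gibbsEntropy τ lam :=
  add_nonneg (div_nonneg (mul_nonneg hτ hS) (zero_le_one.trans hZ)) (log_nonneg hZ)

lemma gibbsEntropy_le (hτ : 0 ≤ τ) (hS : 0 ≤ ∑ i, lam i * exp (-τ * lam i))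
    (hZ : 1 ≤ ∑ i, exp (-τ * lam i)) :
    gibbsEntropy τ lam ≤
      τ * ∑ i, lam i * exp (-τ * lam i) + (∑ i, exp (-τ * lam i) - 1) := by
  have hdiv := div_le_self (mul_nonneg hτ hS) hZ
  have hlog := log_le_sub_one_of_pos (zero_lt_one.trans_le hZ)
  unfold gibbsEntropy
  linarith

lemma gibbsEntropy_le_of_gap {L B : ℝ} (hτ : 0 ≤ τ) (hL : 0 ≤ L) {i₀ : m} (hzero : lam i₀ = 0)
    (hgap : ∀ i ≠ i₀, L ≤ lam i) (hmax : ∀ i, lam i ≤ B) :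
    0 ≤ gibbsEntropy τ lam ∧
      gibbsEntropy τ lam ≤ Fintype.card m * (τ * B + 1) * exp (-τ * L) := by
  classical
  have hB : 0 ≤ B := hzero ▸ hmax i₀
  have hweight : ∀ i ≠ i₀, exp (-τ * lam i) ≤ exp (-τ * L) := fun i hi =>
    exp_le_exp.mpr (by nlinarith [hgap i hi])
  have hrest : ∀ (f : ℝ → ℝ) (c : ℝ), 0 ≤ c → (∀ i ≠ i₀, f (lam i) ≤ c) →
      ∑ i ∈ univ.erase i₀, f (lam i) ≤ Fintype.card m * c := fun f c hc hf =>
    calc ∑ i ∈ univ.erase i₀, f (lam i) ≤ (univ.erase i₀).card • c :=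
          sum_le_card_nsmul _ _ _ fun i hi => hf i (ne_of_mem_erase hi)
      _ ≤ Fintype.card m * c := by
          rw [nsmul_eq_mul]
          gcongr
          exact_mod_cast card_erase_le
  have hZ : ∑ i, exp (-τ * lam i) = 1 + ∑ i ∈ univ.erase i₀, exp (-τ * lam i) := by
    rw [← add_sum_erase _ _ (mem_univ i₀), hzero, mul_zero, exp_zero]
  have hS : ∑ i, lam i * exp (-τ * lam i) = ∑ i ∈ univ.erase i₀, lam i * exp (-τ * lam i) := by
    rw [← add_sum_erase _ _ (mem_univ i₀), hzero, zero_mul, zero_add]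
  have hZle := hrest (fun x => exp (-τ * x)) _ (exp_pos _).le hweight
  have hSle := hrest (fun x => x * exp (-τ * x)) (B * exp (-τ * L)) (by positivity)
    fun i hi => mul_le_mul (hmax i) (hweight i hi) (exp_pos _).le hB
  have hSnn : 0 ≤ ∑ i, lam i * exp (-τ * lam i) := by
    rw [hS]
    exact sum_nonneg fun i hi =>
      mul_nonneg (hL.trans (hgap i (ne_of_mem_erase hi))) (exp_pos _).le
  have hZ1 : 1 ≤ ∑ i, exp (-τ * lam i) := by
    rw [hZ]
    exact le_add_of_nonneg_right (sum_nonneg fun i _ => (exp_pos _).le)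
  refine ⟨gibbsEntropy_nonneg hτ hSnn hZ1, (gibbsEntropy_le hτ hSnn hZ1).trans ?_⟩
  rw [hZ, hS, add_sub_cancel_left]
  calc τ * ∑ i ∈ univ.erase i₀, lam i * exp (-τ * lam i) +
        ∑ i ∈ univ.erase i₀, exp (-τ * lam i)
      ≤ τ * (Fintype.card m * (B * exp (-τ * L))) + Fintype.card m * exp (-τ * L) :=
        add_le_add (mul_le_mul_of_nonneg_left hSle hτ) hZle
    _ = Fintype.card m * (τ * B + 1) * exp (-τ * L) := by ring

end Bounds

lemma tendsto_affine_mul_exp_neg_mul_atTop {k : ℝ} (hk : 0 < k) (c d : ℝ) :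
    Tendsto (fun t => (c * t + d) * exp (-k * t)) atTop (nhds 0) := by
  have hlin := (tendsto_rpow_mul_exp_neg_mul_atTop_nhds_zero 1 k hk).const_mul c
  have hconst := (tendsto_rpow_mul_exp_neg_mul_atTop_nhds_zero 0 k hk).const_mul d
  simpa only [rpow_one, rpow_zero, mul_zero, add_zero, one_mul, ← mul_assoc, ← add_mul]
    using hlin.add hconst

lemma tendsto_natCast_mul_exp_neg_mul_log {τ a : ℝ} (hτa : 1 < τ * a) (b : ℝ) :
    Tendsto (fun n : ℕ => (n : ℝ) * (τ * (b * log n) + 1) * exp (-τ * (a * log n)))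
      atTop (nhds 0) := by
  have hlog : Tendsto (fun n : ℕ => log n) atTop atTop :=
    tendsto_log_atTop.comp tendsto_natCast_atTop_atTop
  refine ((tendsto_affine_mul_exp_neg_mul_atTop (sub_pos.mpr hτa) (τ * b) 1).comp hlog).congr' ?_
  filter_upwards [eventually_gt_atTop 0] with n hn
  have hexp : exp (log n) = n := exp_log (by exact_mod_cast hn)
  simp only [Function.comp_apply]
  rw [← hexp, log_exp, mul_assoc, mul_comm (exp _), mul_assoc, ← exp_add]
  ring_nf

theorem gibbs_entropy_vanishes_large_tau_general (τ a b : ℝ)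
    (ha : 0 < a) (hτa : 1 / a < τ)
    (H : (n : ℕ) → Matrix (Fin n) (Fin n) ℂ)
    (hpsd : ∀ n, (H n).PosSemidef)
    (hker : ∀ n, 2 ≤ n → ∃! i, (hpsd n).isHermitian.eigenvalues i = 0)
    (hlmin : ∀ n, 2 ≤ n →
      IsLeast {x | x ∈ Set.range (hpsd n).isHermitian.eigenvalues ∧ x ≠ 0}
        (a * Real.log n))
    (hlmax : ∀ n, 2 ≤ n →
      IsGreatest (Set.range (hpsd n).isHermitian.eigenvalues) (b * Real.log n)) :
    Tendsto (fun n : ℕ => gibbsEntropy τ (hpsd n).isHermitian.eigenvalues)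
      atTop (nhds 0) := by
  have hτ : 0 < τ := (one_div_pos.mpr ha).trans hτa
  have hτa' : 1 < τ * a := by rwa [div_lt_iff₀ ha] at hτa
  have hbound : ∀ᶠ n in atTop, 0 ≤ gibbsEntropy τ (hpsd n).isHermitian.eigenvalues ∧
      gibbsEntropy τ (hpsd n).isHermitian.eigenvalues ≤
        n * (τ * (b * log n) + 1) * exp (-τ * (a * log n)) := by
    filter_upwards [eventually_ge_atTop 2] with n hn
    obtain ⟨i₀, hzero, huniq⟩ := hker n hn
    simpa only [Fintype.card_fin] using
      gibbsEntropy_le_of_gap hτ.le (mul_nonneg ha.le (log_natCast_nonneg n)) hzero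
      (fun i hi => (hlmin n hn).2 ⟨⟨i, rfl⟩, fun h => hi (huniq i h)⟩)
      (fun i => (hlmax n hn).2 ⟨i, rfl⟩)
  exact tendsto_of_tendsto_of_tendsto_of_le_of_le' tendsto_const_nhds
    (tendsto_natCast_mul_exp_neg_mul_log hτa' b) (hbound.mono fun _ h => h.1)
    (hbound.mono fun _ h => h.2)

/-- Singular PSD matrices with one zero eigenvalue, smallest nonzero eigenvalue
`a·log n` and largest eigenvalue `b·log n` (`b ≥ a > 0`): if `τ > 1/a` then
`S(ρ_{H_n}^τ) → 0`. -/
theorem gibbs_entropy_vanishes_large_tau (τ a b : ℝ)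
    (ha : 0 < a) (hab : a ≤ b) (hτa : 1 / a < τ)
    (H : (n : ℕ) → Matrix (Fin n) (Fin n) ℂ)
    (hpsd : ∀ n, (H n).PosSemidef)
    (hker : ∀ n, 2 ≤ n → ∃! i, (hpsd n).isHermitian.eigenvalues i = 0)
    (hlmin : ∀ n, 2 ≤ n →
      IsLeast {x | x ∈ Set.range (hpsd n).isHermitian.eigenvalues ∧ x ≠ 0}
        (a * Real.log n))
    (hlmax : ∀ n, 2 ≤ n →
      IsGreatest (Set.range (hpsd n).isHermitian.eigenvalues) (b * Real.log n)) :
    Tendsto (fun n : ℕ => gibbsEntropy τ (hpsd n).isHermitian.eigenvalues)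
      atTop (nhds 0) :=
  gibbs_entropy_vanishes_large_tau_general τ a b ha hτa H hpsd hker hlmin hlmax
end
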